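/- arXiv:1704.06159 — 10 statements merged into one kernel-verified Lean document; each statement's English description precedes it below -/
import Mathlib

section
/- If D and D' are almost inner derivations of a Lie algebra g (i.e., D(x) ∈ [g,x] for all x ∈ g), then their commutator [D,D'] = DD' - D'D is also an almost inner derivation of g. -/
namespace LieDerivation

variable {R L : Type*} [CommRing R] [LieRing L] [LieAlgebra R L]

/-- The Leibniz rule reduces `D (D' x) - D' (D x)` to `⁅D y' - D' y, x⁆` plus
`⁅y', ⁅y, x⁆⁆ - ⁅y, ⁅y', x⁆⁆`, which is `⁅⁅y', y⁆, x⁆` by the Jacobi identity. -/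
lemma lie_apply_eq_lie_of_apply_eq_lie {D D' : LieDerivation R L L} {x y y' : L}
    (hy : D x = ⁅y, x⁆) (hy' : D' x = ⁅y', x⁆) :
    ⁅D, D'⁆ x = ⁅D y' - D' y + ⁅y', y⁆, x⁆ := by
  rw [commutator_apply, hy, hy', D.apply_lie_eq_add, D'.apply_lie_eq_add, hy, hy',
    add_lie, sub_lie, lie_lie]
  abel

end LieDerivation

/-- If `D` and `D'` are almost inner derivations of a Lie algebra `g`
(i.e. `D x ∈ ⁅g, x⁆` for all `x`), then `⁅D, D'⁆ = D ∘ D' - D' ∘ D` is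
also an almost inner derivation. -/
theorem stmt0 {K L : Type*} [Field K] [LieRing L] [LieAlgebra K L]
    (D D' : LieDerivation K L L)
    (hD : ∀ x : L, ∃ y : L, D x = ⁅y, x⁆)
    (hD' : ∀ x : L, ∃ y : L, D' x = ⁅y, x⁆) :
    ∀ x : L, ∃ y : L, (⁅D, D'⁆ : LieDerivation K L L) x = ⁅y, x⁆ := by
  intro x
  obtain ⟨y, hy⟩ := hD x
  obtain ⟨y', hy'⟩ := hD' x
  exact ⟨_, LieDerivation.lie_apply_eq_lie_of_apply_eq_lie hy hy'⟩
end

section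
/- If C and C' are central almost inner derivations of a Lie algebra g, then so is [C,C'] = CC' - C'C. Hence CAID(g) is a Lie subalgebra of Der(g). -/
/-! If `C = ad a + φ` and `C' = ad b + ψ` with `φ, ψ` central-valued, then `ad a` kills the
center, so `C` and `C'` map the center into itself, and `⁅C, C'⁆ - ad ⁅a, b⁆` is a sum of
central-valued terms. Almost innerness of `⁅C, C'⁆` at `x` follows from the Leibniz rule:
if `C x = ⁅y, x⁆` and `C' x = ⁅y', x⁆`, then `⁅C, C'⁆ x = ⁅C y' - C' y + ⁅y', y⁆, x⁆`. -/

namespace LieDerivation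

variable {R L : Type*} [CommRing R] [LieRing L] [LieAlgebra R L]

def IsAlmostInner (D : LieDerivation R L L) : Prop :=
  ∀ x : L, ∃ y : L, D x = ⁅y, x⁆

def IsInnerModCenter (D : LieDerivation R L L) : Prop :=
  ∃ x : L, ∀ z : L, D z - ⁅x, z⁆ ∈ LieAlgebra.center R L

theorem IsAlmostInner.lie {C C' : LieDerivation R L L} (hC : C.IsAlmostInner)
    (hC' : C'.IsAlmostInner) : IsAlmostInner ⁅C, C'⁆ := by
  intro x
  obtain ⟨y, hy⟩ := hC x
  obtain ⟨y', hy'⟩ := hC' x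
  refine ⟨C y' - C' y + ⁅y', y⁆, ?_⟩
  have hCC' : C (C' x) = ⁅C y', x⁆ + ⁅y', ⁅y, x⁆⁆ := by
    rw [hy', C.apply_lie_eq_add, hy]; abel
  have hC'C : C' (C x) = ⁅C' y, x⁆ + ⁅y, ⁅y', x⁆⁆ := by
    rw [hy, C'.apply_lie_eq_add, hy']; abel
  rw [lie_apply, hCC', hC'C, add_lie, sub_lie, lie_lie]
  abel

theorem apply_mem_center_of_sub_ad_mem_center {D : LieDerivation R L L} {a : L}
    (hD : ∀ z : L, D z - ⁅a, z⁆ ∈ LieAlgebra.center R L) {c : L}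
    (hc : c ∈ LieAlgebra.center R L) : D c ∈ LieAlgebra.center R L := by
  simpa only [show ⁅a, c⁆ = 0 from hc a, sub_zero] using hD c

theorem IsInnerModCenter.lie {C C' : LieDerivation R L L} (hC : C.IsInnerModCenter)
    (hC' : C'.IsInnerModCenter) : IsInnerModCenter ⁅C, C'⁆ := by
  obtain ⟨a, ha⟩ := hC
  obtain ⟨b, hb⟩ := hC'
  refine ⟨⁅a, b⁆, fun z => ?_⟩
  have hsplit : ⁅C, C'⁆ z - ⁅⁅a, b⁆, z⁆ =
      (C ⁅b, z⁆ - ⁅a, ⁅b, z⁆⁆) - (C' ⁅a, z⁆ - ⁅b, ⁅a, z⁆⁆) +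
        (C (C' z - ⁅b, z⁆) - C' (C z - ⁅a, z⁆)) := by
    rw [lie_apply, map_sub, map_sub, lie_lie]
    abel
  rw [hsplit]
  exact add_mem (sub_mem (ha _) (hb _))
    (sub_mem (apply_mem_center_of_sub_ad_mem_center ha (hb z))
      (apply_mem_center_of_sub_ad_mem_center hb (ha z)))

end LieDerivation

/-- A derivation `D` of `g` is almost inner if `D x ∈ ⁅g, x⁆` for all `x`;
it is central almost inner if moreover `D - ad x` maps `g` into the center
for some `x`.  The bracket of two central almost inner derivations is again
central almost inner; hence `CAID(g)` is a Lie subalgebra of `Der(g)`. -/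
theorem stmt1 {K L : Type*} [Field K] [LieRing L] [LieAlgebra K L]
    (C C' : LieDerivation K L L)
    (hC : ∀ x : L, ∃ y : L, C x = ⁅y, x⁆)
    (hC' : ∀ x : L, ∃ y : L, C' x = ⁅y, x⁆)
    (hCc : ∃ x : L, ∀ z : L, C z - ⁅x, z⁆ ∈ LieAlgebra.center K L)
    (hCc' : ∃ x : L, ∀ z : L, C' z - ⁅x, z⁆ ∈ LieAlgebra.center K L) :
    (∀ x : L, ∃ y : L, (⁅C, C'⁆ : LieDerivation K L L) x = ⁅y, x⁆) ∧
    (∃ x : L, ∀ z : L, (⁅C, C'⁆ : LieDerivation K L L) z - ⁅x, z⁆ ∈ LieAlgebra.center K L) :=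
  ⟨LieDerivation.IsAlmostInner.lie hC hC', LieDerivation.IsInnerModCenter.lie hCc hCc'⟩
end

section
/- CAID(g) is a Lie ideal in AID(g): if C is a central almost inner derivation and D is an almost inner derivation of a Lie algebra g, then [D,C] is central almost inner. -/
/-!
Write `C = ad x + Z` with `Z` central-valued. An almost inner derivation `D` kills the centre,
so `D ∘ Z = 0`; and `Z`, being a derivation with central values, kills every bracket, hence
`Z ∘ D = 0` because `D` takes values in brackets. So `⁅D, C⁆ = ⁅D, ad x⁆ = ad (D x)`.
-/

namespace LieDerivation

variable {R L : Type*} [CommRing R] [LieRing L] [LieAlgebra R L]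

lemma apply_eq_zero_of_mem_center (D : LieDerivation R L L)
    (hD : ∀ x : L, ∃ y : L, D x = ⁅y, x⁆) {c : L} (hc : c ∈ LieAlgebra.center R L) :
    D c = 0 := by
  obtain ⟨y, hy⟩ := hD c
  rw [hy, (LieModule.mem_maxTrivSubmodule R L L c).mp hc y]

lemma apply_lie_eq_of_sub_ad_mem_center (C : LieDerivation R L L) {x : L}
    (hx : ∀ z : L, C z - ⁅x, z⁆ ∈ LieAlgebra.center R L) (a b : L) :
    C ⁅a, b⁆ = ⁅x, ⁅a, b⁆⁆ := by
  have lie_central (c d : L) (hc : c ∈ LieAlgebra.center R L) : ⁅d, c⁆ = 0 :=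
    (LieModule.mem_maxTrivSubmodule R L L c).mp hc d
  have ha : ⁅C a, b⁆ = ⁅⁅x, a⁆, b⁆ := by
    rw [← sub_eq_zero, ← sub_lie, ← lie_skew, lie_central _ _ (hx a), neg_zero]
  have hb : ⁅a, C b⁆ = ⁅a, ⁅x, b⁆⁆ := by
    rw [← sub_eq_zero, ← lie_sub, lie_central _ _ (hx b)]
  rw [apply_lie_eq_add, ha, hb, leibniz_lie x a b, add_comm]

lemma commutator_apply_eq_lie_of_sub_ad_mem_center (D C : LieDerivation R L L)
    (hD : ∀ x : L, ∃ y : L, D x = ⁅y, x⁆) {x : L}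
    (hx : ∀ z : L, C z - ⁅x, z⁆ ∈ LieAlgebra.center R L) (z : L) :
    ⁅D, C⁆ z = ⁅D x, z⁆ := by
  have hDC : D (C z) = ⁅x, D z⁆ + ⁅D x, z⁆ := by
    rw [← sub_add_cancel (C z) ⁅x, z⁆, map_add, D.apply_eq_zero_of_mem_center hD (hx z),
      zero_add, apply_lie_eq_add]
  have hCD : C (D z) = ⁅x, D z⁆ := by
    obtain ⟨v, hv⟩ := hD z
    rw [hv, C.apply_lie_eq_of_sub_ad_mem_center hx]
  rw [commutator_apply, hDC, hCD, add_sub_cancel_left]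

end LieDerivation

theorem stmt2_general {K L : Type*} [Field K] [LieRing L] [LieAlgebra K L]
    (D C : LieDerivation K L L)
    (hD : ∀ x : L, ∃ y : L, D x = ⁅y, x⁆)
    (hCc : ∃ x : L, ∀ z : L, C z - ⁅x, z⁆ ∈ LieAlgebra.center K L) :
    (∀ x : L, ∃ y : L, (⁅D, C⁆ : LieDerivation K L L) x = ⁅y, x⁆) ∧
    (∃ x : L, ∀ z : L, (⁅D, C⁆ : LieDerivation K L L) z - ⁅x, z⁆ ∈ LieAlgebra.center K L) := by
  obtain ⟨x, hx⟩ := hCc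
  have key := D.commutator_apply_eq_lie_of_sub_ad_mem_center C hD hx
  refine ⟨fun z => ⟨D x, key z⟩, D x, fun z => ?_⟩
  rw [key z, sub_self]
  exact zero_mem _

/-- CAID(g) is a Lie ideal in AID(g): if `C` is central almost inner and `D` is
almost inner, then `⁅D, C⁆` is central almost inner. -/
theorem stmt2 {K L : Type*} [Field K] [LieRing L] [LieAlgebra K L]
    (D C : LieDerivation K L L)
    (hD : ∀ x : L, ∃ y : L, D x = ⁅y, x⁆)
    (hC : ∀ x : L, ∃ y : L, C x = ⁅y, x⁆)
    (hCc : ∃ x : L, ∀ z : L, C z - ⁅x, z⁆ ∈ LieAlgebra.center K L) :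
    (∀ x : L, ∃ y : L, (⁅D, C⁆ : LieDerivation K L L) x = ⁅y, x⁆) ∧
    (∃ x : L, ∀ z : L, (⁅D, C⁆ : LieDerivation K L L) z - ⁅x, z⁆ ∈ LieAlgebra.center K L) :=
  stmt2_general D C hD hCc
end

section
/- Every almost inner derivation of the 3-dimensional Heisenberg Lie algebra n₃(K) (with basis e₁,e₂,e₃ and only nonzero bracket [e₁,e₂]=e₃) is inner. -/
/-!
Choose `yᵢ` with `D (e i) = ⁅yᵢ, e i⁆` for `i = 0, 1`. As `⁅e 0, e 2⁆ = 0`, the centralizers of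
`e 0` and `e 1` together span `L`, so `y₀ - y₁ = a + b` with `a` centralizing `e 0` and `b`
centralizing `e 1`; then `y = y₀ - a = y₁ + b` serves both generators at once. Since `e 0` and
`e 1` generate `L` as a Lie algebra, the derivations `D` and `ad y` coincide.
-/

section LieRing

variable {L : Type*} [LieRing L]

lemma exists_lie_eq_lie_eq_of_forall_exists_add {x₀ x₁ : L}
    (hsplit : ∀ z : L, ∃ a b : L, a + b = z ∧ ⁅a, x₀⁆ = 0 ∧ ⁅b, x₁⁆ = 0) (y₀ y₁ : L) :
    ∃ y : L, ⁅y, x₀⁆ = ⁅y₀, x₀⁆ ∧ ⁅y, x₁⁆ = ⁅y₁, x₁⁆ := by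
  obtain ⟨a, b, hab, ha, hb⟩ := hsplit (y₀ - y₁)
  have hy : y₀ - a = y₁ + b := by
    rw [← sub_add_cancel y₀ y₁, ← hab]
    abel
  refine ⟨y₀ - a, by rw [sub_lie, ha, sub_zero], ?_⟩
  rw [hy, add_lie, hb, add_zero]

end LieRing

section Basis

variable {K L : Type*} [CommRing K] [LieRing L] [LieAlgebra K L] (e : Module.Basis (Fin 3) K L)

lemma Module.Basis.exists_add_eq_of_lie_zero_two_eq_zero
    (h02 : ⁅e 0, e 2⁆ = 0) (z : L) :
    ∃ a b : L, a + b = z ∧ ⁅a, e 0⁆ = 0 ∧ ⁅b, e 1⁆ = 0 := by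
  refine ⟨e.repr z 0 • e 0 + e.repr z 2 • e 2, e.repr z 1 • e 1, ?_, ?_, ?_⟩
  · conv_rhs => rw [← e.sum_repr z]
    rw [Fin.sum_univ_three]
    abel
  · rw [add_lie, smul_lie, smul_lie, lie_self, ← lie_skew, h02]
    simp
  · rw [smul_lie, lie_self, smul_zero]

lemma Module.Basis.lieSpan_eq_top_of_lie_eq (h01 : ⁅e 0, e 1⁆ = e 2) :
    LieSubalgebra.lieSpan K L {e 0, e 1} = ⊤ := by
  rw [eq_top_iff, ← LieSubalgebra.toSubmodule_le_toSubmodule, LieSubalgebra.top_toSubmodule,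
    ← e.span_eq, Submodule.span_le]
  have h0 : e 0 ∈ LieSubalgebra.lieSpan K L {e 0, e 1} := LieSubalgebra.subset_lieSpan (by simp)
  have h1 : e 1 ∈ LieSubalgebra.lieSpan K L {e 0, e 1} := LieSubalgebra.subset_lieSpan (by simp)
  rintro _ ⟨i, rfl⟩
  fin_cases i
  · exact h0
  · exact h1
  · exact h01 ▸ LieSubalgebra.lie_mem _ h0 h1

end Basis

theorem stmt4_general {K L : Type*} [Field K] [LieRing L] [LieAlgebra K L]
    (e : Module.Basis (Fin 3) K L)
    (h12 : ⁅e 0, e 1⁆ = e 2) (h13 : ⁅e 0, e 2⁆ = 0)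
    (D : LieDerivation K L L) (hD : ∀ x : L, ∃ y : L, D x = ⁅y, x⁆) :
    ∃ y : L, ∀ x : L, D x = ⁅y, x⁆ := by
  obtain ⟨y₀, hy₀⟩ := hD (e 0)
  obtain ⟨y₁, hy₁⟩ := hD (e 1)
  obtain ⟨y, h0, h1⟩ := exists_lie_eq_lie_eq_of_forall_exists_add
    (e.exists_add_eq_of_lie_zero_two_eq_zero h13) y₀ y₁
  have hDy : D = LieDerivation.ad K L y := by
    refine LieDerivation.ext_of_lieSpan_eq_top _ (e.lieSpan_eq_top_of_lie_eq h12) ?_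
    rintro _ (rfl | rfl)
    · simp [hy₀, h0]
    · simp [hy₁, h1]
  exact ⟨y, fun x => by simp [hDy]⟩

/-- Every almost inner derivation of the 3-dimensional Heisenberg Lie algebra
`n₃(K)` (basis `e₁, e₂, e₃` with `⁅e₁,e₂⁆ = e₃` the only nonzero bracket)
is inner. -/
theorem stmt4 {K L : Type*} [Field K] [LieRing L] [LieAlgebra K L]
    (e : Module.Basis (Fin 3) K L)
    (h12 : ⁅e 0, e 1⁆ = e 2) (h13 : ⁅e 0, e 2⁆ = 0) (h23 : ⁅e 1, e 2⁆ = 0)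
    (D : LieDerivation K L L) (hD : ∀ x : L, ∃ y : L, D x = ⁅y, x⁆) :
    ∃ y : L, ∀ x : L, D x = ⁅y, x⁆ :=
  stmt4_general e h12 h13 D hD
end

section
/- If g is a nilpotent Lie algebra of nilpotency class c, then every almost inner derivation D of g is a nilpotent linear map; in fact D^c = 0. -/
namespace LieModule

variable {R L M : Type*} [CommRing R] [LieRing L] [LieAlgebra R L]
  [AddCommGroup M] [Module R M] [LieRingModule L M]

theorem pow_apply_mem_lowerCentralSeries_of_forall_eq_lie (f : Module.End R M)
    (hf : ∀ m, ∃ x : L, f m = ⁅x, m⁆) (n : ℕ) (m : M) :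
    (f ^ n) m ∈ lowerCentralSeries R L M n := by
  induction n with
  | zero => simp
  | succ n ih =>
    obtain ⟨x, hx⟩ := hf ((f ^ n) m)
    rw [pow_succ', Module.End.mul_apply, hx, lowerCentralSeries_succ]
    exact LieSubmodule.lie_mem_lie (LieSubmodule.mem_top x) ih

theorem pow_eq_zero_of_forall_eq_lie {f : Module.End R M} (hf : ∀ m, ∃ x : L, f m = ⁅x, m⁆)
    {c : ℕ} (hc : lowerCentralSeries R L M c = ⊥) : f ^ c = 0 := by
  ext m
  simpa [hc] using pow_apply_mem_lowerCentralSeries_of_forall_eq_lie f hf c m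

end LieModule

/-- If `g` is nilpotent of class `c` (i.e. `γ_{c+1}(g) = 0`), then every
almost inner derivation `D` of `g` is a nilpotent linear map; in fact `D^c = 0`. -/
theorem stmt10 {K L : Type*} [Field K] [LieRing L] [LieAlgebra K L]
    (c : ℕ) (hc : LieModule.lowerCentralSeries K L L c = ⊥)
    (D : LieDerivation K L L) (hD : ∀ x : L, ∃ y : L, D x = ⁅y, x⁆) :
    (D.toLinearMap ^ c = 0) ∧ IsNilpotent D.toLinearMap := by
  have hDc : D.toLinearMap ^ c = 0 := LieModule.pow_eq_zero_of_forall_eq_lie hD hc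
  exact ⟨hDc, c, hDc⟩
end

section
/- For a direct sum of Lie algebras g ⊕ g', the map D ↦ (D|_g, D|_{g'}) gives an isomorphism AID(g ⊕ g') ≅ AID(g) ⊕ AID(g'). -/
/-!
An almost inner derivation `D` of `g ⊕ g'` sends `(x, 0)` to a bracket `⁅y, (x, 0)⁆ ∈ g ⊕ 0`,
and likewise `(0, x')` into `0 ⊕ g'`. So `D` preserves both factors and is the componentwise
map of its two restrictions. Conversely, the componentwise map of two almost inner derivations
is almost inner, witnessed by the pair of witnesses.
-/

section ProdLie

variable (K L L' : Type*) [Field K] [LieRing L] [LieAlgebra K L]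
  [LieRing L'] [LieAlgebra K L']

/-- The direct sum (product) of two Lie rings, with componentwise bracket. -/
instance prodLieRing : LieRing (L × L') where
  bracket p q := (⁅p.1, q.1⁆, ⁅p.2, q.2⁆)
  add_lie x y z := Prod.ext (add_lie x.1 y.1 z.1) (add_lie x.2 y.2 z.2)
  lie_add x y z := Prod.ext (lie_add x.1 y.1 z.1) (lie_add x.2 y.2 z.2)
  lie_self x := Prod.ext (lie_self x.1) (lie_self x.2)
  leibniz_lie x y z := Prod.ext (leibniz_lie x.1 y.1 z.1) (leibniz_lie x.2 y.2 z.2)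

/-- The direct sum of two Lie algebras. -/
instance prodLieAlgebra : LieAlgebra K (L × L') where
  lie_smul c x y := Prod.ext (lie_smul c x.1 y.1) (lie_smul c x.2 y.2)

/-- The space of almost inner derivations of a Lie algebra, as a submodule of
the module of derivations. -/
def AID : Submodule K (LieDerivation K L L) where
  carrier := {D | ∀ x : L, ∃ y : L, D x = ⁅y, x⁆}
  add_mem' := by
    intro D D' hD hD' x
    obtain ⟨y, hy⟩ := hD x
    obtain ⟨y', hy'⟩ := hD' x
    exact ⟨y + y', by simp [hy, hy', add_lie]⟩
  zero_mem' := fun x => ⟨0, by simp⟩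
  smul_mem' := by
    intro c D hD x
    obtain ⟨y, hy⟩ := hD x
    exact ⟨c • y, by simp [hy, smul_lie]⟩

variable {K L L'}

@[simp] lemma Prod.lie_def (p q : L × L') : ⁅p, q⁆ = (⁅p.1, q.1⁆, ⁅p.2, q.2⁆) := rfl

namespace LieDerivation

def restrictFst (D : LieDerivation K (L × L') (L × L')) : LieDerivation K L L where
  __ := LinearMap.fst K L L' ∘ₗ (D : L × L' →ₗ[K] L × L') ∘ₗ LinearMap.inl K L L'
  leibniz' a b := by
    simpa using congrArg Prod.fst (D.apply_lie_eq_sub (a, 0) (b, 0))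

def restrictSnd (D : LieDerivation K (L × L') (L × L')) : LieDerivation K L' L' where
  __ := LinearMap.snd K L L' ∘ₗ (D : L × L' →ₗ[K] L × L') ∘ₗ LinearMap.inr K L L'
  leibniz' a b := by
    simpa using congrArg Prod.snd (D.apply_lie_eq_sub (0, a) (0, b))

def prodMap (D : LieDerivation K L L) (D' : LieDerivation K L' L') :
    LieDerivation K (L × L') (L × L') where
  __ := LinearMap.prodMap (D : L →ₗ[K] L) (D' : L' →ₗ[K] L')
  leibniz' a b := by simp [D.apply_lie_eq_sub, D'.apply_lie_eq_sub]

@[simp] lemma restrictFst_apply (D : LieDerivation K (L × L') (L × L')) (x : L) :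
    restrictFst D x = (D (x, 0)).1 := rfl

@[simp] lemma restrictSnd_apply (D : LieDerivation K (L × L') (L × L')) (x : L') :
    restrictSnd D x = (D (0, x)).2 := rfl

@[simp] lemma prodMap_apply (D : LieDerivation K L L) (D' : LieDerivation K L' L') (p : L × L') :
    prodMap D D' p = (D p.1, D' p.2) := rfl

end LieDerivation

namespace AID

open LieDerivation

variable {D : LieDerivation K (L × L') (L × L')}

lemma restrictFst_mem (hD : D ∈ AID K (L × L')) : restrictFst D ∈ AID K L := fun x => by
  obtain ⟨y, hy⟩ := hD (x, 0)
  exact ⟨y.1, by simp [hy]⟩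

lemma restrictSnd_mem (hD : D ∈ AID K (L × L')) : restrictSnd D ∈ AID K L' := fun x => by
  obtain ⟨y, hy⟩ := hD (0, x)
  exact ⟨y.2, by simp [hy]⟩

lemma prodMap_mem {D₁ : LieDerivation K L L} {D₂ : LieDerivation K L' L'}
    (h₁ : D₁ ∈ AID K L) (h₂ : D₂ ∈ AID K L') : prodMap D₁ D₂ ∈ AID K (L × L') := fun p => by
  obtain ⟨y₁, hy₁⟩ := h₁ p.1
  obtain ⟨y₂, hy₂⟩ := h₂ p.2
  exact ⟨(y₁, y₂), by simp [hy₁, hy₂]⟩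

lemma snd_apply_inl (hD : D ∈ AID K (L × L')) (x : L) : (D (x, 0)).2 = 0 := by
  obtain ⟨y, hy⟩ := hD (x, 0)
  simp [hy]

lemma fst_apply_inr (hD : D ∈ AID K (L × L')) (x : L') : (D (0, x)).1 = 0 := by
  obtain ⟨y, hy⟩ := hD (0, x)
  simp [hy]

lemma prodMap_restrict (hD : D ∈ AID K (L × L')) :
    prodMap (restrictFst D) (restrictSnd D) = D := by
  refine LieDerivation.ext fun p => ?_
  have hsplit : D p = D (p.1, 0) + D (0, p.2) := by
    rw [← map_add, Prod.mk_add_mk, add_zero, zero_add]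
  simp [hsplit, Prod.ext_iff, snd_apply_inl hD, fst_apply_inr hD]

variable (K L L')

def prodEquiv : AID K (L × L') ≃ₗ[K] AID K L × AID K L' where
  toFun D := (⟨restrictFst D.1, restrictFst_mem D.2⟩, ⟨restrictSnd D.1, restrictSnd_mem D.2⟩)
  invFun D := ⟨prodMap D.1.1 D.2.1, prodMap_mem D.1.2 D.2.2⟩
  map_add' _ _ := by ext <;> simp
  map_smul' _ _ := by ext <;> simp
  left_inv D := Subtype.ext (prodMap_restrict D.2)
  right_inv _ := by ext <;> simp

end AID

/-- For a direct sum `g ⊕ g'` of Lie algebras, the map `D ↦ (D|_g, D|_{g'})`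
gives an isomorphism `AID(g ⊕ g') ≅ AID(g) ⊕ AID(g')`. -/
theorem stmt11 :
    ∃ e : AID K (L × L') ≃ₗ[K] AID K L × AID K L',
      ∀ D : AID K (L × L'),
        (∀ x : L, ((e D).1 : LieDerivation K L L) x = ((D : LieDerivation K (L × L') (L × L')) (x, 0)).1) ∧
        (∀ x' : L', ((e D).2 : LieDerivation K L' L') x' = ((D : LieDerivation K (L × L') (L × L')) (0, x')).2) := by
  exact ⟨AID.prodEquiv K L L', fun _ => ⟨fun _ => rfl, fun _ => rfl⟩⟩

end ProdLie
end

section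
/- Let D be an almost inner derivation of a Lie algebra g with basis e₁,...,eₙ, determined by a map φ_D with D(x) = [x, φ_D(x)]; if for each i there is α_i ∈ K such that t_i(φ_D(e_j)) = α_i for all j with e_j ∉ C_g(e_i), then D = -ad(Σ α_i e_i). -/
/-- If every basis vector is a fixed vector for an almost inner derivation `D`
determined by `φ` (i.e. for each `i` there is `αᵢ` with `tᵢ(φ(eⱼ)) = αᵢ`
whenever `eⱼ ∉ C_g(eᵢ)`), then `D` is inner: `D = -ad (Σ αᵢ eᵢ)`. -/
theorem stmt12 {K L : Type*} [Field K] [LieRing L] [LieAlgebra K L]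
    {n : ℕ} (e : Module.Basis (Fin n) K L)
    (D : LieDerivation K L L) (φ : L → L)
    (hφ : ∀ x : L, D x = ⁅x, φ x⁆)
    (α : Fin n → K)
    (hfix : ∀ i j : Fin n, ⁅e i, e j⁆ ≠ 0 → e.repr (φ (e j)) i = α i) :
    ∀ x : L, D x = ⁅x, ∑ i, α i • e i⁆ := by
  set v := ∑ i, α i • e i with hv
  have key : ∀ j, D (e j) = ⁅e j, v⁆ := by
    intro j
    have h1 : D (e j) = (LieAlgebra.ad K L (e j)) (φ (e j)) := hφ (e j)
    have h2 : ⁅e j, v⁆ = (LieAlgebra.ad K L (e j)) v := rfl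
    rw [h1, h2, hv]
    conv_lhs => rw [← e.sum_repr (φ (e j))]
    rw [map_sum, map_sum]
    refine Finset.sum_congr rfl fun i _ => ?_
    rw [map_smul, map_smul]
    by_cases h : ⁅e i, e j⁆ = 0
    · have h' : (LieAlgebra.ad K L (e j)) (e i) = 0 := by
        show ⁅e j, e i⁆ = 0
        rw [← lie_skew, h, neg_zero]
      simp [h']
    · rw [hfix i j h]
  have hlin : D.toLinearMap = -((LieAlgebra.ad K L) v) := by
    apply e.ext
    intro j
    have : (D.toLinearMap) (e j) = D (e j) := rfl
    rw [this, key j, LinearMap.neg_apply, LieAlgebra.ad_apply, lie_skew]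
  intro x
  have h := LinearMap.congr_fun hlin x
  rw [LinearMap.neg_apply, LieAlgebra.ad_apply] at h
  calc D x = -⁅v, x⁆ := h
    _ = ⁅x, v⁆ := lie_skew x v
end

section
/- Let g be a Lie algebra with basis e₁,...,eₙ, let D be an almost inner derivation determined by φ_D (i.e., D(x)=[x,φ_D(x)]), and suppose indices i,j,k,l,m with l≠m and nonzero scalars α, β satisfy: [e_j,e_i] - α e_l and [e_k,e_i] - β e_m lie in the span of basis vectors other than e_l,e_m, and [e_j, g_i] and [e_k, g_i] are contained in that span, where g_i is the span of basis vectors other than e_i. Then t_i(φ_D(e_j)) = t_i(φ_D(e_k)). -/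
/-! The point is that `x ↦ ⁅x, φ x⁆` is additive although `φ` need not be. Put `y = φ (e j + e k)`.
The hypotheses say that the `l`-coordinate of `⁅e j, x⁆` is `α t_i(x)` and its `m`-coordinate
vanishes, while the `m`-coordinate of `⁅e k, x⁆` is `β t_i(x)` and its `l`-coordinate vanishes.
Reading `⁅e j, φ (e j)⁆ + ⁅e k, φ (e k)⁆ = ⁅e j, y⁆ + ⁅e k, y⁆` in the coordinates `l` and `m` gives
`α t_i(φ e_j) = α t_i(y)` and `β t_i(φ e_k) = β t_i(y)`. -/

namespace Module.Basis

variable {ι R M : Type*} [CommRing R] [AddCommGroup M] [Module R M] (b : Basis ι R M)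

theorem repr_eq_zero_of_mem_span_image {s : Set ι} {x : M} (hx : x ∈ Submodule.span R (b '' s))
    {p : ι} (hp : p ∉ s) : b.repr x p = 0 := by
  by_contra h
  exact hp ((b.mem_span_image.1 hx) (Finsupp.mem_support_iff.2 h))

theorem repr_eq_of_sub_mem_span_image {s : Set ι} {x y : M}
    (h : x - y ∈ Submodule.span R (b '' s)) {p : ι} (hp : p ∉ s) : b.repr x p = b.repr y p := by
  simpa [sub_eq_zero] using b.repr_eq_zero_of_mem_span_image h hp

theorem sub_repr_smul_mem_span_image_ne (x : M) (i : ι) :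
    x - b.repr x i • b i ∈ Submodule.span R (b '' {p | p ≠ i}) := by
  rw [mem_span_image]
  intro p hp
  rintro rfl
  simp at hp

end Module.Basis

section LieAlgebra

variable {ι R L : Type*} [CommRing R] [LieRing L] [LieAlgebra R L]

theorem lie_add_lie_eq_lie_add_lie {F : Type*} [FunLike F L L] [AddHomClass F L L] (D : F)
    {φ : L → L} (hφ : ∀ x, D x = ⁅x, φ x⁆) (a b : L) :
    ⁅a, φ a⁆ + ⁅b, φ b⁆ = ⁅a, φ (a + b)⁆ + ⁅b, φ (a + b)⁆ := by
  rw [← hφ, ← hφ, ← map_add, hφ, add_lie]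

theorem lie_sub_repr_smul_mem (e : Module.Basis ι R L) {N : Submodule R L} {a v : L} {i : ι}
    {γ : R} (hi : ⁅a, e i⁆ - γ • v ∈ N)
    (hN : ∀ w ∈ Submodule.span R (e '' {p | p ≠ i}), ⁅a, w⁆ ∈ N) (x : L) :
    ⁅a, x⁆ - (e.repr x i * γ) • v ∈ N := by
  have hx := hN _ (e.sub_repr_smul_mem_span_image_ne x i)
  have hsplit : ⁅a, x⁆ - (e.repr x i * γ) • v
      = e.repr x i • (⁅a, e i⁆ - γ • v) + ⁅a, x - e.repr x i • e i⁆ := by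
    simp only [lie_sub, lie_smul, smul_sub, smul_smul]
    abel
  rw [hsplit]
  exact N.add_mem (N.smul_mem _ hi) hx

theorem repr_lie_eq_of_lie_basis_sub_smul_mem (e : Module.Basis ι R L) {s : Set ι} {a : L}
    {i p q : ι} {γ : R} (hpq : p ≠ q) (hp : p ∉ s) (hq : q ∉ s)
    (hi : ⁅a, e i⁆ - γ • e p ∈ Submodule.span R (e '' s))
    (hN : ∀ w ∈ Submodule.span R (e '' {p | p ≠ i}), ⁅a, w⁆ ∈ Submodule.span R (e '' s))
    (x : L) : e.repr ⁅a, x⁆ p = e.repr x i * γ ∧ e.repr ⁅a, x⁆ q = 0 := by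
  have h := lie_sub_repr_smul_mem e hi hN x
  rw [e.repr_eq_of_sub_mem_span_image h hp, e.repr_eq_of_sub_mem_span_image h hq]
  simp [hpq]

end LieAlgebra

/-- Lemma 3.7: with `l ≠ m` and nonzero scalars `α, β` such that
`[e_j,e_i] - α e_l ∈ g_{l,m}`, `[e_k,e_i] - β e_m ∈ g_{l,m}`,
`[e_j, g_i] ⊆ g_{l,m}` and `[e_k, g_i] ⊆ g_{l,m}`, any almost inner
derivation `D` determined by `φ` satisfies `t_i(φ(e_j)) = t_i(φ(e_k))`. -/
theorem stmt13 {K L : Type*} [Field K] [LieRing L] [LieAlgebra K L]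
    {n : ℕ} (e : Module.Basis (Fin n) K L)
    (D : LieDerivation K L L) (φ : L → L)
    (hφ : ∀ x : L, D x = ⁅x, φ x⁆)
    (i j k l m : Fin n) (hlm : l ≠ m) (α β : K) (hα : α ≠ 0) (hβ : β ≠ 0)
    (glm : Submodule K L) (hglm : glm = Submodule.span K (e '' {p | p ≠ l ∧ p ≠ m}))
    (gi : Submodule K L) (hgi : gi = Submodule.span K (e '' {p | p ≠ i}))
    (h1 : ⁅e j, e i⁆ - α • e l ∈ glm)
    (h2 : ⁅e k, e i⁆ - β • e m ∈ glm)
    (h3 : ∀ v ∈ gi, ⁅e j, v⁆ ∈ glm)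
    (h4 : ∀ v ∈ gi, ⁅e k, v⁆ ∈ glm) :
    e.repr (φ (e j)) i = e.repr (φ (e k)) i := by
  subst hglm hgi
  have hl : l ∉ {p | p ≠ l ∧ p ≠ m} := fun h ↦ h.1 rfl
  have hm : m ∉ {p | p ≠ l ∧ p ≠ m} := fun h ↦ h.2 rfl
  have hj := repr_lie_eq_of_lie_basis_sub_smul_mem e hlm hl hm h1 h3
  have hk := repr_lie_eq_of_lie_basis_sub_smul_mem e hlm.symm hm hl h2 h4
  have hD := lie_add_lie_eq_lie_add_lie D hφ (e j) (e k)
  have hl_coord := congrArg (e.repr · l) hD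
  have hm_coord := congrArg (e.repr · m) hD
  simp only [map_add, Finsupp.add_apply, (hj _).1, (hj _).2, (hk _).1, (hk _).2, add_zero,
    zero_add] at hl_coord hm_coord
  rw [mul_right_cancel₀ hα hl_coord, mul_right_cancel₀ hβ hm_coord]
end

section
/- Let g be a Lie algebra with basis e₁,...,eₙ, D an almost inner derivation determined by φ_D, and suppose indices i,j,k,l and nonzero scalars α, β satisfy: [e_j,e_i] - α e_l ∈ g_l, [e_k,e_i] - β e_l ∈ g_l, [e_j, g_i] ⊆ g_l and [e_k, g_i] ⊆ g_l, where g_i (resp. g_l) is the span of basis vectors other than e_i (resp. e_l). Then t_i(φ_D(e_j)) = t_i(φ_D(e_k)). -/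
/-!
The hypotheses say exactly that `t_l ⁅e_j, v⁆ = α t_i(v)` and `t_l ⁅e_k, v⁆ = β t_i(v)` for
every `v`. Hence `x = β e_j - α e_k` satisfies `t_l ⁅x, v⁆ = 0` for all `v`, in particular
`t_l (D x) = t_l ⁅x, φ_D x⁆ = 0`, while expanding `D x` by linearity gives
`t_l (D x) = αβ (t_i(φ_D e_j) - t_i(φ_D e_k))`.
-/

open Submodule

namespace Module.Basis

variable {ι R M : Type*}

theorem mem_span_image_ne_iff [Semiring R] [AddCommMonoid M] [Module R M] (b : Basis ι R M)
    (l : ι) {m : M} : m ∈ span R (b '' {p | p ≠ l}) ↔ b.repr m l = 0 := by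
  rw [b.mem_span_image]
  simp only [Set.subset_def, Finset.mem_coe, Finsupp.mem_support_iff, Set.mem_ofPred_eq]
  exact ⟨fun h => by_contra fun hl => h l hl rfl, fun h p hp hpl => hp (hpl ▸ h)⟩

theorem repr_apply_eq_mul_repr [CommRing R] [AddCommGroup M] [Module R M] (b : Basis ι R M)
    (f : M →ₗ[R] M) {i l : ι} {α : R} (hi : f (b i) - α • b l ∈ span R (b '' {p | p ≠ l}))
    (hf : ∀ v ∈ span R (b '' {p | p ≠ i}), f v ∈ span R (b '' {p | p ≠ l})) (v : M) :
    b.repr (f v) l = α * b.repr v i := by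
  rw [mem_span_image_ne_iff] at hi
  have hrest : b.repr (f (v - b.repr v i • b i)) l = 0 :=
    (b.mem_span_image_ne_iff l).1 (hf _ ((b.mem_span_image_ne_iff i).2 (by simp)))
  simp only [map_sub, map_smul, Finsupp.sub_apply, Finsupp.smul_apply, repr_self,
    Finsupp.single_eq_same, smul_eq_mul, mul_one, sub_eq_zero] at hi hrest
  rw [hrest, hi, mul_comm]

end Module.Basis

/-- Lemma 3.8: with nonzero scalars `α, β` such that
`[e_j,e_i] - α e_l ∈ g_l`, `[e_k,e_i] - β e_l ∈ g_l`,
`[e_j, g_i] ⊆ g_l` and `[e_k, g_i] ⊆ g_l`, any almost inner derivation `D`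
determined by `φ` satisfies `t_i(φ(e_j)) = t_i(φ(e_k))`. -/
theorem stmt14 {K L : Type*} [Field K] [LieRing L] [LieAlgebra K L]
    {n : ℕ} (e : Module.Basis (Fin n) K L)
    (D : LieDerivation K L L) (φ : L → L)
    (hφ : ∀ x : L, D x = ⁅x, φ x⁆)
    (i j k l : Fin n) (α β : K) (hα : α ≠ 0) (hβ : β ≠ 0)
    (gl : Submodule K L) (hgl : gl = Submodule.span K (e '' {p | p ≠ l}))
    (gi : Submodule K L) (hgi : gi = Submodule.span K (e '' {p | p ≠ i}))
    (h1 : ⁅e j, e i⁆ - α • e l ∈ gl)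
    (h2 : ⁅e k, e i⁆ - β • e l ∈ gl)
    (h3 : ∀ v ∈ gi, ⁅e j, v⁆ ∈ gl)
    (h4 : ∀ v ∈ gi, ⁅e k, v⁆ ∈ gl) :
    e.repr (φ (e j)) i = e.repr (φ (e k)) i := by
  subst hgl hgi
  have hj : ∀ v, e.repr ⁅e j, v⁆ l = α * e.repr v i :=
    e.repr_apply_eq_mul_repr (LieAlgebra.ad K L (e j)) h1 h3
  have hk : ∀ v, e.repr ⁅e k, v⁆ l = β * e.repr v i :=
    e.repr_apply_eq_mul_repr (LieAlgebra.ad K L (e k)) h2 h4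
  have hD : e.repr (D (β • e j - α • e k)) l = 0 := by
    rw [hφ, sub_lie, smul_lie, smul_lie]
    simp only [map_sub, map_smul, Finsupp.sub_apply, Finsupp.smul_apply, hj, hk, smul_eq_mul]
    ring
  rw [map_sub, map_smul, map_smul] at hD
  simp only [map_sub, map_smul, Finsupp.sub_apply, Finsupp.smul_apply, hφ, hj, hk,
    smul_eq_mul] at hD
  exact mul_left_cancel₀ (mul_ne_zero hα hβ) (by linear_combination hD)
end

section
/- For the 2-step nilpotent Lie algebra g determined by a finite simple graph G(V,E), every almost inner derivation is inner: AID(g) = Inn(g). -/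
/-!
Write `D x_i = ⁅w_i, x_i⁆`. The coordinate of `⁅z, x_i⁆` at an edge `{j, i}` is `±z_j`, and its
other coordinates vanish, so `⁅z, x_i⁆` only sees the coordinates of `z` at the neighbours of `i`.
Applying almost-innerness to `x_i + x_i'` for two neighbours `i, i'` of `j` and reading off the
coordinate at `{j, i}` shows that the `j`-coordinate of `w_i` does not depend on the neighbour `i`
of `j`. The vertex combination `y` with these coordinates then has `D x_i = ⁅y, x_i⁆` for every
vertex, and both sides vanish on the central edges.
-/

open Module

namespace SimpleGraph

variable {V : Type*} {G : SimpleGraph V}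

def Adj.edge {i j : V} (h : G.Adj i j) : G.edgeSet := ⟨s(i, j), G.mem_edgeSet.mpr h⟩

lemma Adj.edge_symm {i j : V} (h : G.Adj i j) : h.symm.edge = h.edge :=
  Subtype.ext Sym2.eq_swap

end SimpleGraph

open SimpleGraph

section

variable {K L V : Type*} [Field K] [LieRing L] [LieAlgebra K L]

lemma Module.Basis.repr_lie_eq_of_forall_basis {ι : Type*} (b : Basis ι K L) (x : L) (t : ι)
    (φ : L →ₗ[K] K) (h : ∀ s, b.repr ⁅b s, x⁆ t = φ (b s)) (z : L) : b.repr ⁅z, x⁆ t = φ z := by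
  let ψ : L →ₗ[K] K := -(b.coord t ∘ₗ (LieAlgebra.ad K L x : L →ₗ[K] L))
  have coord_lie (y : L) : b.repr ⁅y, x⁆ t = ψ y := by
    simp only [ψ, LinearMap.neg_apply, LinearMap.comp_apply, LieAlgebra.ad_apply,
      Basis.coord_apply, ← lie_skew y x, map_neg, Finsupp.neg_apply]
  have hψ : ψ = φ := b.ext fun s => (coord_lie (b s)).symm.trans (h s)
  rw [coord_lie, hψ]

def LieDerivation.IsAlmostInner_s15 (D : LieDerivation K L L) : Prop := ∀ x : L, ∃ y : L, D x = ⁅y, x⁆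

variable [LinearOrder V] {G : SimpleGraph V}

/-- `b (Sum.inl i)` is the vertex `x_i` and `b (Sum.inr e)` the edge `y_e`. -/
structure IsGraphLieBasis (G : SimpleGraph V) (b : Basis (V ⊕ G.edgeSet) K L) : Prop where
  lie_inl_of_lt : ∀ i j : V, i < j → ∀ h : G.Adj i j,
    ⁅b (Sum.inl i), b (Sum.inl j)⁆ = b (Sum.inr h.edge)
  lie_inl_of_not_adj : ∀ i j : V, ¬ G.Adj i j → ⁅b (Sum.inl i), b (Sum.inl j)⁆ = 0
  inr_lie : ∀ (e : G.edgeSet) (z : L), ⁅b (Sum.inr e), z⁆ = 0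

def bracketSign (K : Type*) [Field K] (j i : V) : K := if j < i then 1 else -1

lemma bracketSign_ne_zero (j i : V) : bracketSign K j i ≠ 0 := by
  unfold bracketSign; split_ifs <;> simp

namespace IsGraphLieBasis

variable {b : Basis (V ⊕ G.edgeSet) K L} (hb : IsGraphLieBasis G b)
include hb

lemma lie_inl_of_adj {j i : V} (h : G.Adj j i) :
    ⁅b (Sum.inl j), b (Sum.inl i)⁆ = bracketSign K j i • b (Sum.inr h.edge) := by
  rcases lt_or_gt_of_ne h.ne with hlt | hgt
  · rw [hb.lie_inl_of_lt j i hlt h, bracketSign, if_pos hlt, one_smul]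
  · rw [bracketSign, if_neg (not_lt.mpr hgt.le), ← lie_skew, hb.lie_inl_of_lt i j hgt h.symm,
      Adj.edge_symm, neg_one_smul]

lemma repr_lie_inl_inl (z : L) (i m : V) : b.repr ⁅z, b (Sum.inl i)⁆ (Sum.inl m) = 0 := by
  refine b.repr_lie_eq_of_forall_basis _ _ 0 (fun s => ?_) z
  rcases s with j | e
  · by_cases h : G.Adj j i
    · simp [hb.lie_inl_of_adj h]
    · simp [hb.lie_inl_of_not_adj j i h]
  · simp [hb.inr_lie]

lemma repr_lie_inl_inr_of_notMem (z : L) {i : V} {e : G.edgeSet} (hie : i ∉ (e : Sym2 V)) :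
    b.repr ⁅z, b (Sum.inl i)⁆ (Sum.inr e) = 0 := by
  refine b.repr_lie_eq_of_forall_basis _ _ 0 (fun s => ?_) z
  rcases s with j | e'
  · by_cases h : G.Adj j i
    · have hne : h.edge ≠ e := fun he => hie (he ▸ Sym2.mem_mk_right j i)
      simp [hb.lie_inl_of_adj h, hne]
    · simp [hb.lie_inl_of_not_adj j i h]
  · simp [hb.inr_lie]

lemma repr_lie_inl_edge (z : L) {j i : V} (h : G.Adj j i) :
    b.repr ⁅z, b (Sum.inl i)⁆ (Sum.inr h.edge) = bracketSign K j i * b.repr z (Sum.inl j) := by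
  refine b.repr_lie_eq_of_forall_basis _ _ (bracketSign K j i • b.coord (Sum.inl j)) (fun s => ?_) z
  rcases s with m | e
  · by_cases hm : G.Adj m i
    · have : hm.edge = h.edge ↔ m = j := Subtype.ext_iff.trans Sym2.congr_left
      by_cases hmj : m = j
      · subst hmj; simp [hb.lie_inl_of_adj hm]
      · simp [hb.lie_inl_of_adj hm, this, hmj]
    · have hmj : m ≠ j := by rintro rfl; exact hm h
      simp [hb.lie_inl_of_not_adj m i hm, hmj]
  · simp [hb.inr_lie]

lemma lie_inl_eq_of_repr_eq {u v : L} {i : V}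
    (h : ∀ j, G.Adj j i → b.repr u (Sum.inl j) = b.repr v (Sum.inl j)) :
    ⁅u, b (Sum.inl i)⁆ = ⁅v, b (Sum.inl i)⁆ := by
  refine b.repr.injective (Finsupp.ext fun t => ?_)
  rcases t with m | ⟨e, he⟩
  · rw [hb.repr_lie_inl_inl, hb.repr_lie_inl_inl]
  · by_cases hie : i ∈ e
    · obtain ⟨j, rfl⟩ := Sym2.mem_iff_exists.mp hie
      have hij : G.Adj i j := G.mem_edgeSet.mp he
      change b.repr _ (Sum.inr hij.edge) = b.repr _ (Sum.inr hij.edge)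
      rw [← hij.edge_symm, hb.repr_lie_inl_edge, hb.repr_lie_inl_edge, h j hij.symm]
    · rw [hb.repr_lie_inl_inr_of_notMem _ hie, hb.repr_lie_inl_inr_of_notMem _ hie]

lemma repr_inl_eq_of_lie_add_eq {u u' z z' : L} {j i i' : V} (h : G.Adj j i)
    (hi' : i' ∉ s(j, i))
    (heq : ⁅u, b (Sum.inl i)⁆ + ⁅u', b (Sum.inl i')⁆ = ⁅z, b (Sum.inl i)⁆ + ⁅z', b (Sum.inl i')⁆) :
    b.repr u (Sum.inl j) = b.repr z (Sum.inl j) := by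
  have hedge := congr_arg (fun y => b.repr y (Sum.inr h.edge)) heq
  simp only [map_add, Finsupp.add_apply, hb.repr_lie_inl_edge,
    hb.repr_lie_inl_inr_of_notMem (e := h.edge) _ hi', add_zero] at hedge
  exact mul_left_cancel₀ (bracketSign_ne_zero j i) hedge

lemma repr_inl_eq_of_isAlmostInner {D : LieDerivation K L L} (hD : D.IsAlmostInner_s15) {w : V → L}
    (hw : ∀ i, D (b (Sum.inl i)) = ⁅w i, b (Sum.inl i)⁆) {j i i' : V}
    (h : G.Adj j i) (h' : G.Adj j i') :
    b.repr (w i) (Sum.inl j) = b.repr (w i') (Sum.inl j) := by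
  rcases eq_or_ne i i' with rfl | hne
  · rfl
  obtain ⟨z, hz⟩ := hD (b (Sum.inl i) + b (Sum.inl i'))
  have hsum : ⁅w i, b (Sum.inl i)⁆ + ⁅w i', b (Sum.inl i')⁆
      = ⁅z, b (Sum.inl i)⁆ + ⁅z, b (Sum.inl i')⁆ := by
    rw [← hw, ← hw, ← map_add, hz, lie_add]
  have hi' : i' ∉ s(j, i) := by simp [h'.ne.symm, hne.symm]
  have hi : i ∉ s(j, i') := by simp [h.ne.symm, hne]
  exact (hb.repr_inl_eq_of_lie_add_eq h hi' hsum).trans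
    (hb.repr_inl_eq_of_lie_add_eq (u' := w i) (z' := z) h' hi
      (by rw [add_comm, hsum, add_comm])).symm

theorem exists_eq_lie_of_isAlmostInner [Finite V] {D : LieDerivation K L L}
    (hD : D.IsAlmostInner_s15) : ∃ y : L, ∀ x : L, D x = ⁅y, x⁆ := by
  choose w hw using fun i : V => hD (b (Sum.inl i))
  have hconst : ∀ j, ∃ a : K, ∀ i, G.Adj j i → b.repr (w i) (Sum.inl j) = a := by
    intro j
    by_cases hj : ∃ i, G.Adj j i
    · obtain ⟨i₀, h₀⟩ := hj
      exact ⟨_, fun i h => hb.repr_inl_eq_of_isAlmostInner hD hw h h₀⟩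
    · exact ⟨0, fun i h => (hj ⟨i, h⟩).elim⟩
  choose a ha using hconst
  obtain ⟨y, hy⟩ : ∃ y : L, ∀ j, b.repr y (Sum.inl j) = a j :=
    ⟨b.repr.symm (Finsupp.equivFunOnFinite.symm (Sum.elim a 0)), by simp⟩
  refine ⟨y, LinearMap.congr_fun (b.ext (f₁ := D.toLinearMap) (f₂ := LieAlgebra.ad K L y) ?_)⟩
  rintro (i | e)
  · exact (hw i).trans (hb.lie_inl_eq_of_repr_eq fun j h => (ha j i h).trans (hy j).symm)
  · obtain ⟨z, hz⟩ := hD (b (Sum.inr e))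
    simp [hz, ← lie_skew _ (b (Sum.inr e)), hb.inr_lie]

end IsGraphLieBasis

end

theorem stmt15_general {K L : Type*} [Field K] [LieRing L] [LieAlgebra K L]
    (r : ℕ) (G : SimpleGraph (Fin r))
    (b : Module.Basis (Fin r ⊕ G.edgeSet) K L)
    (hadj : ∀ i j : Fin r, i < j → ∀ h : G.Adj i j,
      ⁅b (Sum.inl i), b (Sum.inl j)⁆ = b (Sum.inr ⟨s(i, j), G.mem_edgeSet.mpr h⟩))
    (hnadj : ∀ i j : Fin r, ¬ G.Adj i j → ⁅b (Sum.inl i), b (Sum.inl j)⁆ = 0)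
    (hcent : ∀ e : G.edgeSet, ∀ z : L, ⁅b (Sum.inr e), z⁆ = 0)
    (D : LieDerivation K L L) (hD : ∀ x : L, ∃ y : L, D x = ⁅y, x⁆) :
    ∃ y : L, ∀ x : L, D x = ⁅y, x⁆ :=
  IsGraphLieBasis.exists_eq_lie_of_isAlmostInner ⟨hadj, hnadj, hcent⟩ hD

/-- For the 2-step nilpotent Lie algebra determined by a finite simple graph
(vertices and edges form a basis, `⁅x_i, x_j⁆ = y_{i,j}` for each edge with
`i < j`, all other brackets of basis vectors zero), every almost inner
derivation is inner: `AID(g) = Inn(g)`. -/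
theorem stmt15 {K L : Type*} [Field K] [LieRing L] [LieAlgebra K L]
    (r : ℕ) (G : SimpleGraph (Fin r)) [DecidableRel G.Adj]
    (b : Module.Basis (Fin r ⊕ G.edgeSet) K L)
    (hadj : ∀ i j : Fin r, i < j → ∀ h : G.Adj i j,
      ⁅b (Sum.inl i), b (Sum.inl j)⁆ = b (Sum.inr ⟨s(i, j), G.mem_edgeSet.mpr h⟩))
    (hnadj : ∀ i j : Fin r, ¬ G.Adj i j → ⁅b (Sum.inl i), b (Sum.inl j)⁆ = 0)
    (hcent : ∀ e : G.edgeSet, ∀ z : L, ⁅b (Sum.inr e), z⁆ = 0)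
    (D : LieDerivation K L L) (hD : ∀ x : L, ∃ y : L, D x = ⁅y, x⁆) :
    ∃ y : L, ∀ x : L, D x = ⁅y, x⁆ :=
  stmt15_general r G b hadj hnadj hcent D hD
end
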